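/- arXiv:math/0702625 — 2 statements merged into one kernel-verified Lean document; each statement's English description precedes it below -/
import Mathlib

section
/- Given W ≥ 0 and ε > 0, suppose Ψ : Λ → Λ satisfies: (3) dist²(γ, Ψ(γ)) ≤ φ((Length²(γ) − Length²(Ψ(γ)))/Length²(Ψ(γ))) for a continuous φ with φ(0) = 0, and (4) for every ε' > 0 there is δ' > 0 so that dist(γ, G) ≥ ε' implies Length(Ψ(γ)) ≤ Length(γ) − δ'. Then there exists δ > 0 so that if γ ∈ Λ and 2π(W − δ) < Length²(Ψ(γ)) ≤ Length²(γ) < 2π(W + δ), then dist(Ψ(γ), G) < ε. -/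
open Real

/-! If `Ψγ` is short, then `Ψγ` itself is near `G`, since far from `G` the map `Ψ` would shorten
`Ψγ` by a definite amount below zero. Otherwise the drop `Length²γ − Length²(Ψγ) < 4πδ` is small
also relative to `Length²(Ψγ)`, so property (4) puts `γ` near `G` and property (3) puts `Ψγ` near
`γ`; the triangle inequality concludes. -/

section ShorteningMap

variable {Λ : Type*} [MetricSpace Λ] {G : Set Λ} {Length : Λ → ℝ} {Ψ : Λ → Λ} {ε' δ' : ℝ}

theorem infDist_lt_of_length_lt (hLen : ∀ γ, 0 ≤ Length γ)
    (hdrop : ∀ γ, Metric.infDist γ G ≥ ε' → Length (Ψ γ) ≤ Length γ - δ') {γ : Λ}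
    (hγ : Length γ < δ') : Metric.infDist γ G < ε' := by
  by_contra! hfar
  linarith [hdrop γ hfar, hLen (Ψ γ)]

theorem sq_le_sq_sub_sq_of_le_sub {a b d : ℝ} (hb : 0 ≤ b) (hd : 0 ≤ d) (h : b ≤ a - d) :
    d ^ 2 ≤ a ^ 2 - b ^ 2 := by
  nlinarith

theorem infDist_lt_of_sq_length_sub_lt (hLen : ∀ γ, 0 ≤ Length γ) (hδ' : 0 ≤ δ')
    (hdrop : ∀ γ, Metric.infDist γ G ≥ ε' → Length (Ψ γ) ≤ Length γ - δ') {γ : Λ}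
    (hγ : Length γ ^ 2 - Length (Ψ γ) ^ 2 < δ' ^ 2) : Metric.infDist γ G < ε' := by
  by_contra! hfar
  linarith [sq_le_sq_sub_sq_of_le_sub (hLen (Ψ γ)) hδ' (hdrop γ hfar)]

end ShorteningMap

theorem abs_div_sq_lt_of_lt_mul_sq {d L m η : ℝ} (hm : 0 < m) (hmL : m ≤ L) (hd : 0 ≤ d)
    (hdη : d < η * m ^ 2) : |d / L ^ 2| < η := by
  have hm2 : 0 < m ^ 2 := by positivity
  rw [abs_of_nonneg (by positivity)]
  calc d / L ^ 2 ≤ d / m ^ 2 := div_le_div_of_nonneg_left hd hm2 (by gcongr)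
    _ < η := (div_lt_iff₀ hm2).2 hdη

theorem exists_pos_forall_abs_lt_lt_of_continuousAt {φ : ℝ → ℝ} (hφ : ContinuousAt φ 0)
    (hφ0 : φ 0 = 0) {c : ℝ} (hc : 0 < c) : ∃ η > 0, ∀ x, |x| < η → φ x < c := by
  have : ∀ᶠ x in nhds 0, φ x < c := hφ.eventually_lt_const (by rwa [hφ0])
  obtain ⟨η, hη, hball⟩ := Metric.eventually_nhds_iff.1 this
  exact ⟨η, hη, fun x hx => hball (by rwa [Real.dist_eq, sub_zero])⟩

theorem almost_no_drop_implies_close_to_geodesics_general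
    {Λ : Type*} [MetricSpace Λ] (G : Set Λ)
    (Length : Λ → ℝ) (hLen : ∀ γ, 0 ≤ Length γ)
    (Ψ : Λ → Λ)
    -- property (3): distance moved by `Ψ` is controlled by the relative length drop
    (φ : ℝ → ℝ) (hφcont : Continuous φ) (hφ0 : φ 0 = 0)
    (h3 : ∀ γ, dist γ (Ψ γ) ^ 2
      ≤ φ ((Length γ ^ 2 - Length (Ψ γ) ^ 2) / Length (Ψ γ) ^ 2))
    -- property (4): curves far from `G` have a definite length decrease
    (h4 : ∀ ε' > (0 : ℝ), ∃ δ' > (0 : ℝ), ∀ γ,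
      Metric.infDist γ G ≥ ε' → Length (Ψ γ) ≤ Length γ - δ')
    (W : ℝ) (ε : ℝ) (hε : 0 < ε) :
    ∃ δ > (0 : ℝ), ∀ γ : Λ,
      2 * π * (W - δ) < Length (Ψ γ) ^ 2 →
      Length (Ψ γ) ^ 2 ≤ Length γ ^ 2 →
      Length γ ^ 2 < 2 * π * (W + δ) →
      Metric.infDist (Ψ γ) G < ε := by
  obtain ⟨δ₂, hδ₂, hdrop₂⟩ := h4 ε hε
  obtain ⟨δ₁, hδ₁, hdrop₁⟩ := h4 (ε / 2) (half_pos hε)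
  obtain ⟨η, hη, hφη⟩ := exists_pos_forall_abs_lt_lt_of_continuousAt hφcont.continuousAt hφ0
    (pow_pos (half_pos hε) 2)
  refine ⟨min (δ₁ ^ 2) (η * δ₂ ^ 2) / (4 * π), by positivity, fun γ hlow hle hhigh => ?_⟩
  have hdrop : Length γ ^ 2 - Length (Ψ γ) ^ 2 < min (δ₁ ^ 2) (η * δ₂ ^ 2) := by
    have := mul_div_cancel₀ (min (δ₁ ^ 2) (η * δ₂ ^ 2)) (by positivity : 4 * π ≠ 0)
    linarith
  rcases lt_or_ge (Length (Ψ γ)) δ₂ with hshort | hlong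
  · exact infDist_lt_of_length_lt hLen hdrop₂ hshort
  have hγG : Metric.infDist γ G < ε / 2 :=
    infDist_lt_of_sq_length_sub_lt hLen hδ₁.le hdrop₁ (hdrop.trans_le (min_le_left _ _))
  have hmove : dist γ (Ψ γ) < ε / 2 := by
    refine lt_of_pow_lt_pow_left₀ 2 (half_pos hε).le ((h3 γ).trans_lt (hφη _ ?_))
    exact abs_div_sq_lt_of_lt_mul_sq hδ₂ hlong (sub_nonneg.2 hle)
      (hdrop.trans_le (min_le_right _ _))
  calc Metric.infDist (Ψ γ) G ≤ Metric.infDist γ G + dist (Ψ γ) γ :=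
        Metric.infDist_le_infDist_add_dist
    _ < ε := by rw [dist_comm]; linarith

/-- Key lemma combining properties (3) and (4) of the curve-shortening map `Ψ`:
given `W ≥ 0` and `ε > 0`, there exists `δ > 0` so that any `γ ∈ Λ` with
`2π(W − δ) < Length²(Ψγ) ≤ Length²(γ) < 2π(W + δ)` satisfies `dist(Ψγ, G) < ε`.
Here `Λ` is the space of curves with the `W^{1,2}` distance, `G ⊂ Λ` the closed
geodesics, and `Length` the length functional. -/
theorem almost_no_drop_implies_close_to_geodesics
    {Λ : Type*} [MetricSpace Λ] (G : Set Λ) (hG : G.Nonempty)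
    (Length : Λ → ℝ) (hLen : ∀ γ, 0 ≤ Length γ)
    (Ψ : Λ → Λ)
    -- `Ψ` does not increase length
    (hmono : ∀ γ, Length (Ψ γ) ≤ Length γ)
    -- property (3): distance moved by `Ψ` is controlled by the relative length drop
    (φ : ℝ → ℝ) (hφcont : Continuous φ) (hφ0 : φ 0 = 0)
    (h3 : ∀ γ, dist γ (Ψ γ) ^ 2
      ≤ φ ((Length γ ^ 2 - Length (Ψ γ) ^ 2) / Length (Ψ γ) ^ 2))
    -- property (4): curves far from `G` have a definite length decrease
    (h4 : ∀ ε' > (0 : ℝ), ∃ δ' > (0 : ℝ), ∀ γ,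
      Metric.infDist γ G ≥ ε' → Length (Ψ γ) ≤ Length γ - δ')
    (W : ℝ) (hW : 0 ≤ W) (ε : ℝ) (hε : 0 < ε) :
    ∃ δ > (0 : ℝ), ∀ γ : Λ,
      2 * π * (W - δ) < Length (Ψ γ) ^ 2 →
      Length (Ψ γ) ^ 2 ≤ Length γ ^ 2 →
      Length γ ^ 2 < 2 * π * (W + δ) →
      Metric.infDist (Ψ γ) G < ε :=
  almost_no_drop_implies_close_to_geodesics_general G Length hLen Ψ φ hφcont hφ0 h3 h4 W ε hε
end

section
/- Let γ̃ : S¹ → ℝ^N be piecewise C² with |γ̃'| ≤ L, |γ̃''| ≤ L²/16 away from at most L break points, and let P : S¹ → S¹ be monotone with P(x₀) = x₀ and ∫(P'−1)² = η. Let S₁ ⊂ S¹ be the set of points within distance (πη)^{1/2} of a break point and S₂ its complement. Then ∫_{S₂} |γ̃' ∘ P − γ̃'|² ≤ (L⁴/64)·η and ∫_{S₁} |γ̃' ∘ P − γ̃'|² ≤ 8L³(πη)^{1/2}. -/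
open Real MeasureTheory intervalIntegral

lemma cs_interval {a b : ℝ} (hab : a ≤ b) {u : ℝ → ℝ}
    (hu : IntervalIntegrable u volume a b)
    (hu2 : IntervalIntegrable (fun x => u x ^ 2) volume a b) :
    (∫ x in a..b, u x) ^ 2 ≤ (b - a) * ∫ x in a..b, u x ^ 2 := by
  rcases eq_or_lt_of_le hab with rfl | hlt
  · simp
  set I := ∫ x in a..b, u x with hI
  set J := ∫ x in a..b, u x ^ 2 with hJ
  have key : 0 ≤ ∫ x in a..b, ((b - a) * u x - I) ^ 2 := by
    apply intervalIntegral.integral_nonneg hab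
    intro x _; positivity
  have expand : (∫ x in a..b, ((b - a) * u x - I) ^ 2)
      = (b - a) ^ 2 * J - (2 * (b - a) * I) * I + I ^ 2 * (b - a) := by
    have h1 : (fun x => ((b - a) * u x - I) ^ 2)
        = fun x => ((b - a) ^ 2 * u x ^ 2 - (2 * (b - a) * I) * u x) + I ^ 2 := by
      funext x; ring
    rw [h1]
    rw [intervalIntegral.integral_add (((hu2.const_mul _).sub (hu.const_mul _)))
      intervalIntegrable_const,
      intervalIntegral.integral_sub (hu2.const_mul _) (hu.const_mul _),
      intervalIntegral.integral_const_mul, intervalIntegral.integral_const_mul,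
      intervalIntegral.integral_const, smul_eq_mul]
    ring
  rw [expand] at key
  nlinarith [sq_nonneg (b - a), key]


lemma cot_half_le {ε : ℝ} (hε : 0 < ε) (hεπ : ε < π) :
    Real.cos (ε/2) / (2 * Real.sin (ε/2)) ≤ 1/ε := by
  have hπ : (0:ℝ) < π := Real.pi_pos
  have hsinε : 0 < Real.sin (ε/2) :=
    Real.sin_pos_of_pos_of_lt_pi (by linarith) (by linarith)
  have hcosε : 0 < Real.cos (ε/2) := Real.cos_pos_of_mem_Ioo ⟨by linarith, by linarith⟩
  have htan : ε/2 < Real.tan (ε/2) := Real.lt_tan (by linarith) (by linarith)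
  rw [div_le_div_iff₀ (by positivity) hε]
  nlinarith [mul_lt_mul_of_pos_right htan hcosε, Real.tan_mul_cos hcosε.ne']

set_option maxHeartbeats 1600000 in
/-- Comparison of the velocity of a broken geodesic with its reparametrized velocity,
near and away from the breaks: let `γ̃ : S¹ → ℝ^N` be piecewise `C²` with at most `L`
break points `B`, `|γ̃'| ≤ L`, and velocity Lipschitz bound `L²/16` on break-free
intervals; let `P` be a monotone degree-one reparametrization fixing the base point
with `η = ∫(P'−1)²`.  With `S₁` the set of points within distance `(πη)^{1/2}` of a
break and `S₂` its complement in `[0,2π]`, one has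
`∫_{S₂} |γ̃'∘P − γ̃'|² ≤ (L⁴/64)·η` and `∫_{S₁} |γ̃'∘P − γ̃'|² ≤ 8L³(πη)^{1/2}`. -/
theorem velocity_comparison_near_and_away_from_breaks (N : ℕ) (L : ℝ) (hL : 1 ≤ L)
    (γ' : ℝ → EuclideanSpace ℝ (Fin N)) (B : Finset ℝ)
    (hBsub : ↑B ⊆ Set.Icc (0 : ℝ) (2 * π)) (hBcard : (B.card : ℝ) ≤ L)
    (hspeed : ∀ x ∈ Set.Icc (0 : ℝ) (2 * π), ‖γ' x‖ ≤ L)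
    -- velocity Lipschitz bound on intervals containing no break point
    (hlip : ∀ x ∈ Set.Icc (0 : ℝ) (2 * π), ∀ y ∈ Set.Icc (0 : ℝ) (2 * π),
      (∀ b ∈ B, b ∉ Set.Ioo (min x y) (max x y)) →
      ‖γ' x - γ' y‖ ≤ L ^ 2 / 16 * |x - y|)
    (P P' : ℝ → ℝ) (hP0 : P 0 = 0) (hP2pi : P (2 * π) = 2 * π)
    (hPmono : MonotoneOn P (Set.Icc 0 (2 * π)))
    (hPderiv : ∀ x ∈ Set.Icc (0 : ℝ) (2 * π), HasDerivAt P (P' x) x)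
    (hPint2 : IntervalIntegrable (fun x => (P' x - 1) ^ 2) volume 0 (2 * π))
    (η : ℝ) (hη : η = ∫ x in (0 : ℝ)..(2 * π), (P' x - 1) ^ 2)
    (S₁ S₂ : Set ℝ)
    (hS₁ : S₁ = { x ∈ Set.Icc (0 : ℝ) (2 * π) |
      ∃ b ∈ B, |x - b| ≤ Real.sqrt (π * η) })
    (hS₂ : S₂ = Set.Icc (0 : ℝ) (2 * π) \ S₁)
    (hint1 : IntegrableOn (fun x => ‖γ' (P x) - γ' x‖ ^ 2) S₁ volume)
    (hint2 : IntegrableOn (fun x => ‖γ' (P x) - γ' x‖ ^ 2) S₂ volume) :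
    (∫ x in S₂, ‖γ' (P x) - γ' x‖ ^ 2) ≤ L ^ 4 / 64 * η ∧
    (∫ x in S₁, ‖γ' (P x) - γ' x‖ ^ 2) ≤ 8 * L ^ 3 * Real.sqrt (π * η) := by
  
  have hπ : (0:ℝ) < π := Real.pi_pos
  have h2π : (0:ℝ) < 2 * π := by linarith
  have hIcc : Set.uIcc (0:ℝ) (2*π) = Set.Icc (0:ℝ) (2*π) := Set.uIcc_of_le h2π.le
  have hmem0 : (0:ℝ) ∈ Set.Icc (0:ℝ) (2*π) := ⟨le_rfl, h2π.le⟩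
  have hmem2 : (2*π) ∈ Set.Icc (0:ℝ) (2*π) := ⟨h2π.le, le_rfl⟩
  have hsubuIcc : ∀ {c d : ℝ}, c ∈ Set.Icc (0:ℝ) (2*π) → d ∈ Set.Icc (0:ℝ) (2*π) →
      Set.uIcc c d ⊆ Set.Icc (0:ℝ) (2*π) := by
    intro c d hc hd
    rw [← hIcc]
    exact Set.uIcc_subset_uIcc (by rw [hIcc]; exact hc) (by rw [hIcc]; exact hd)
  have hgint : ∀ {c d : ℝ}, c ∈ Set.Icc (0:ℝ) (2*π) → d ∈ Set.Icc (0:ℝ) (2*π) →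
      IntervalIntegrable (fun t => (P' t - 1)^2) volume c d := by
    intro c d hc hd
    refine hPint2.mono_set ?_
    rw [hIcc]
    exact hsubuIcc hc hd
  have hP'eq : ∀ x ∈ Set.Icc (0:ℝ) (2*π), P' x = deriv P x :=
    fun x hx => ((hPderiv x hx).deriv).symm
  have hf'meas : ∀ {c d : ℝ}, c ∈ Set.Icc (0:ℝ) (2*π) → d ∈ Set.Icc (0:ℝ) (2*π) →
      AEStronglyMeasurable (fun x => P' x - 1) (volume.restrict (Set.uIoc c d)) := by
    intro c d hc hd
    have hmeas : AEStronglyMeasurable (fun x => deriv P x - 1)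
        (volume.restrict (Set.uIoc c d)) :=
      ((measurable_deriv P).sub measurable_const).aestronglyMeasurable
    refine hmeas.congr ?_
    have hsub : Set.uIoc c d ⊆ Set.Icc (0:ℝ) (2*π) :=
      Set.uIoc_subset_uIcc.trans (hsubuIcc hc hd)
    filter_upwards [ae_restrict_mem measurableSet_uIoc] with x hx
    rw [hP'eq x (hsub hx)]
  have hf'int : ∀ {c d : ℝ}, c ∈ Set.Icc (0:ℝ) (2*π) → d ∈ Set.Icc (0:ℝ) (2*π) →
      IntervalIntegrable (fun x => P' x - 1) volume c d := by
    intro c d hc hd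
    refine IntervalIntegrable.mono_fun'
      (g := fun x => ((P' x - 1)^2 + 1)/2)
      (((hgint hc hd).add intervalIntegrable_const).div_const 2) (hf'meas hc hd) ?_
    filter_upwards with x
    rw [Real.norm_eq_abs]
    nlinarith [sq_nonneg (|P' x - 1| - 1), sq_abs (P' x - 1)]
  have hPcont : ContinuousOn P (Set.Icc (0:ℝ) (2*π)) :=
    fun x hx => ((hPderiv x hx).continuousAt).continuousWithinAt
  have hPIcc : ∀ x ∈ Set.Icc (0:ℝ) (2*π), P x ∈ Set.Icc (0:ℝ) (2*π) := by
    intro x hx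
    constructor
    · calc (0:ℝ) = P 0 := hP0.symm
        _ ≤ P x := hPmono hmem0 hx hx.1
    · calc P x ≤ P (2*π) := hPmono hx hmem2 hx.2
        _ = 2*π := hP2pi
  have hFTC : ∀ {c d : ℝ}, c ∈ Set.Icc (0:ℝ) (2*π) → d ∈ Set.Icc (0:ℝ) (2*π) →
      (∫ t in c..d, (P' t - 1)) = (P d - d) - (P c - c) := by
    intro c d hc hd
    have := intervalIntegral.integral_eq_sub_of_hasDerivAt (f := fun y => P y - y)
      (f' := fun x => P' x - 1)
      (fun x hx => (hPderiv x (hsubuIcc hc hd hx)).sub (hasDerivAt_id x)) (hf'int hc hd)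
    simpa using this
  have hη0 : 0 ≤ η := by
    rw [hη]
    exact intervalIntegral.integral_nonneg h2π.le (fun u _ => sq_nonneg _)
  have hgsum : ∀ {x : ℝ}, x ∈ Set.Icc (0:ℝ) (2*π) →
      (∫ t in (0:ℝ)..x, (P' t - 1)^2) + (∫ t in x..(2*π), (P' t - 1)^2) = η := by
    intro x hx
    rw [intervalIntegral.integral_add_adjacent_intervals (hgint hmem0 hx) (hgint hx hmem2)]
    exact hη.symm
  have hfsq : ∀ x ∈ Set.Icc (0:ℝ) (2*π), (P x - x)^2 ≤ π * η := by
    intro x hx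
    have hga : 0 ≤ ∫ t in (0:ℝ)..x, (P' t - 1)^2 :=
      intervalIntegral.integral_nonneg hx.1 (fun u _ => sq_nonneg _)
    have hgb : 0 ≤ ∫ t in x..(2*π), (P' t - 1)^2 :=
      intervalIntegral.integral_nonneg hx.2 (fun u _ => sq_nonneg _)
    have hsum := hgsum hx
    rcases le_total x π with hxπ | hxπ
    · have e1 : P x - x = ∫ t in (0:ℝ)..x, (P' t - 1) := by
        rw [hFTC hmem0 hx, hP0]; ring
      have hcs := cs_interval hx.1 (hf'int hmem0 hx) (hgint hmem0 hx)
      rw [← e1] at hcs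
      nlinarith [hx.1]
    · have e2 : -(P x - x) = ∫ t in x..(2*π), (P' t - 1) := by
        rw [hFTC hx hmem2, hP2pi]; ring
      have hcs := cs_interval hx.2 (hf'int hx hmem2) (hgint hx hmem2)
      rw [← e2] at hcs
      nlinarith [hx.2]
  have hf2cont : ContinuousOn (fun x => (P x - x)^2) (Set.Icc (0:ℝ) (2*π)) :=
    (hPcont.sub continuousOn_id).pow 2
  have hf2int : ∀ {c d : ℝ}, c ∈ Set.Icc (0:ℝ) (2*π) → d ∈ Set.Icc (0:ℝ) (2*π) →
      IntervalIntegrable (fun x => (P x - x)^2) volume c d := by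
    intro c d hc hd
    exact (hf2cont.mono (hsubuIcc hc hd)).intervalIntegrable
  -- The Wirtinger-type estimate on the truncated interval
  have hkey : ∀ ε : ℝ, 0 < ε → ε < π →
      (∫ x in ε..(2*π - ε), (P x - x)^2) ≤ 4 * η := by
    intro ε hε hεπ
    have hab : ε ≤ 2*π - ε := by linarith
    have hεI : ε ∈ Set.Icc (0:ℝ) (2*π) := ⟨hε.le, by linarith⟩
    have hbI : (2*π - ε) ∈ Set.Icc (0:ℝ) (2*π) := ⟨by linarith, by linarith⟩
    have hsubI : Set.uIcc ε (2*π - ε) ⊆ Set.Icc (0:ℝ) (2*π) := hsubuIcc hεI hbI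
    have hsinpos : ∀ x ∈ Set.uIcc ε (2*π - ε), 0 < Real.sin (x/2) := by
      intro x hx
      rw [Set.uIcc_of_le hab] at hx
      exact Real.sin_pos_of_pos_of_lt_pi (by linarith [hx.1]) (by linarith [hx.2])
    have hderivG : ∀ x ∈ Set.uIcc ε (2*π - ε),
        HasDerivAt (fun y => Real.cos (y/2) / (2 * Real.sin (y/2)) * (P y - y)^2)
          ((P' x - 1)^2 - (P x - x)^2/4
            - ((P' x - 1) - Real.cos (x/2) / (2 * Real.sin (x/2)) * (P x - x))^2) x := by
      intro x hx
      have hsx : Real.sin (x/2) ≠ 0 := (hsinpos x hx).ne'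
      have hhalf : HasDerivAt (fun y : ℝ => y/2) (1/2) x := (hasDerivAt_id x).div_const 2
      have hcos : HasDerivAt (fun y => Real.cos (y/2)) (-Real.sin (x/2) * (1/2)) x := hhalf.cos
      have hsin' : HasDerivAt (fun y => 2 * Real.sin (y/2)) (2 * (Real.cos (x/2) * (1/2))) x :=
        hhalf.sin.const_mul 2
      have hden : 2 * Real.sin (x/2) ≠ 0 := by simpa using hsx
      have hc' := hcos.fun_div hsin' hden
      have hf : HasDerivAt (fun y => P y - y) (P' x - 1) x :=
        (hPderiv x (hsubI hx)).sub (hasDerivAt_id x)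
      have hf2 : HasDerivAt (fun y => (P y - y)^2) (2 * (P x - x) * (P' x - 1)) x := by
        simpa using hf.fun_pow 2
      have hG := hc'.fun_mul hf2
      refine hG.congr_deriv ?_
      have hpyth := Real.sin_sq_add_cos_sq (x/2)
      field_simp
      nlinarith [hpyth]
    have hccont : ContinuousOn (fun y => Real.cos (y/2) / (2 * Real.sin (y/2)))
        (Set.uIcc ε (2*π - ε)) := by
      apply ContinuousOn.div
      · exact (Real.continuous_cos.comp (continuous_id.div_const 2)).continuousOn
      · exact (continuous_const.mul
          (Real.continuous_sin.comp (continuous_id.div_const 2))).continuousOn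
      · intro x hx
        have := hsinpos x hx
        positivity
    have hfcont : ContinuousOn (fun y => P y - y) (Set.uIcc ε (2*π - ε)) :=
      (hPcont.mono hsubI).sub continuousOn_id
    have hcfcont := hccont.mul hfcont
    have hmid : IntervalIntegrable
        (fun x => (2 * (Real.cos (x/2) / (2 * Real.sin (x/2)) * (P x - x))) * (P' x - 1))
        volume ε (2*π - ε) :=
      (hf'int hεI hbI).continuousOn_mul (continuousOn_const.mul hcfcont)
    have hsqint : IntervalIntegrable
        (fun x => ((P' x - 1) - Real.cos (x/2) / (2 * Real.sin (x/2)) * (P x - x))^2)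
        volume ε (2*π - ε) := by
      have hsq_eq : (fun x => ((P' x - 1) - Real.cos (x/2) / (2 * Real.sin (x/2)) * (P x - x))^2)
          = fun x => ((P' x - 1)^2
              - (2 * (Real.cos (x/2) / (2 * Real.sin (x/2)) * (P x - x))) * (P' x - 1))
              + (Real.cos (x/2) / (2 * Real.sin (x/2)) * (P x - x))^2 := by
        funext x; ring
      rw [hsq_eq]
      exact ((hgint hεI hbI).sub hmid).add ((hcfcont.pow 2).intervalIntegrable)
    have hφint : IntervalIntegrable
        (fun x => (P' x - 1)^2 - (P x - x)^2/4
          - ((P' x - 1) - Real.cos (x/2) / (2 * Real.sin (x/2)) * (P x - x))^2)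
        volume ε (2*π - ε) :=
      ((hgint hεI hbI).sub ((hf2int hεI hbI).div_const 4)).sub hsqint
    have hFTCG : (∫ x in ε..(2*π - ε), ((P' x - 1)^2 - (P x - x)^2/4
          - ((P' x - 1) - Real.cos (x/2) / (2 * Real.sin (x/2)) * (P x - x))^2))
        = Real.cos ((2*π - ε)/2) / (2 * Real.sin ((2*π - ε)/2)) * (P (2*π - ε) - (2*π - ε))^2
          - Real.cos (ε/2) / (2 * Real.sin (ε/2)) * (P ε - ε)^2 :=
      intervalIntegral.integral_eq_sub_of_hasDerivAt hderivG hφint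
    have hcosb : Real.cos ((2*π - ε)/2) = -Real.cos (ε/2) := by
      have h : (2*π - ε)/2 = π - ε/2 := by ring
      rw [h, Real.cos_pi_sub]
    have hsinb : Real.sin ((2*π - ε)/2) = Real.sin (ε/2) := by
      have h : (2*π - ε)/2 = π - ε/2 := by ring
      rw [h, Real.sin_pi_sub]
    rw [hcosb, hsinb] at hFTCG
    rw [neg_div, neg_mul] at hFTCG
    have hsplit : (∫ x in ε..(2*π - ε), ((P' x - 1)^2 - (P x - x)^2/4
          - ((P' x - 1) - Real.cos (x/2) / (2 * Real.sin (x/2)) * (P x - x))^2))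
        = (∫ x in ε..(2*π - ε), (P' x - 1)^2) - (∫ x in ε..(2*π - ε), (P x - x)^2/4)
          - ∫ x in ε..(2*π - ε),
              ((P' x - 1) - Real.cos (x/2) / (2 * Real.sin (x/2)) * (P x - x))^2 := by
      rw [intervalIntegral.integral_sub ((hgint hεI hbI).sub ((hf2int hεI hbI).div_const 4))
        hsqint, intervalIntegral.integral_sub (hgint hεI hbI) ((hf2int hεI hbI).div_const 4)]
    have hsqnn : 0 ≤ ∫ x in ε..(2*π - ε),
        ((P' x - 1) - Real.cos (x/2) / (2 * Real.sin (x/2)) * (P x - x))^2 :=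
      intervalIntegral.integral_nonneg hab (fun u _ => sq_nonneg _)
    have hquarter : (∫ x in ε..(2*π - ε), (P x - x)^2/4)
        = (∫ x in ε..(2*π - ε), (P x - x)^2)/4 := by
      simpa using intervalIntegral.integral_div (4:ℝ) (fun x => (P x - x)^2)
    have hcbound := cot_half_le hε hεπ
    have hI0 : 0 ≤ ∫ t in (0:ℝ)..ε, (P' t - 1)^2 :=
      intervalIntegral.integral_nonneg hε.le (fun u _ => sq_nonneg _)
    have hI1 : 0 ≤ ∫ t in (2*π - ε)..(2*π), (P' t - 1)^2 :=
      intervalIntegral.integral_nonneg (by linarith) (fun u _ => sq_nonneg _)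
    have hGa_ub : Real.cos (ε/2) / (2 * Real.sin (ε/2)) * (P ε - ε)^2
        ≤ ∫ t in (0:ℝ)..ε, (P' t - 1)^2 := by
      have e1 : P ε - ε = ∫ t in (0:ℝ)..ε, (P' t - 1) := by
        rw [hFTC hmem0 hεI, hP0]; ring
      have hcs := cs_interval hε.le (hf'int hmem0 hεI) (hgint hmem0 hεI)
      rw [← e1] at hcs
      have h2 : (P ε - ε)^2 ≤ ε * ∫ t in (0:ℝ)..ε, (P' t - 1)^2 := by nlinarith [hcs]
      have h3 : Real.cos (ε/2) / (2 * Real.sin (ε/2)) * (P ε - ε)^2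
          ≤ (1/ε) * (ε * ∫ t in (0:ℝ)..ε, (P' t - 1)^2) :=
        mul_le_mul hcbound h2 (sq_nonneg _) (by positivity)
      have h4 : (1/ε) * (ε * ∫ t in (0:ℝ)..ε, (P' t - 1)^2)
          = ∫ t in (0:ℝ)..ε, (P' t - 1)^2 := by
        field_simp
      linarith
    have hGb_ub : Real.cos (ε/2) / (2 * Real.sin (ε/2)) * (P (2*π - ε) - (2*π - ε))^2
        ≤ ∫ t in (2*π - ε)..(2*π), (P' t - 1)^2 := by
      have e2 : -(P (2*π - ε) - (2*π - ε)) = ∫ t in (2*π - ε)..(2*π), (P' t - 1) := by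
        rw [hFTC hbI hmem2, hP2pi]; ring
      have hcs := cs_interval (show (2*π - ε) ≤ 2*π by linarith) (hf'int hbI hmem2)
        (hgint hbI hmem2)
      rw [← e2] at hcs
      have h2 : (P (2*π - ε) - (2*π - ε))^2 ≤ ε * ∫ t in (2*π - ε)..(2*π), (P' t - 1)^2 := by
        nlinarith [hcs]
      have h3 : Real.cos (ε/2) / (2 * Real.sin (ε/2)) * (P (2*π - ε) - (2*π - ε))^2
          ≤ (1/ε) * (ε * ∫ t in (2*π - ε)..(2*π), (P' t - 1)^2) :=
        mul_le_mul hcbound h2 (sq_nonneg _) (by positivity)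
      have h4 : (1/ε) * (ε * ∫ t in (2*π - ε)..(2*π), (P' t - 1)^2)
          = ∫ t in (2*π - ε)..(2*π), (P' t - 1)^2 := by
        field_simp
      linarith
    have hηsplit : (∫ t in (0:ℝ)..ε, (P' t - 1)^2) + (∫ t in ε..(2*π - ε), (P' t - 1)^2)
        + (∫ t in (2*π - ε)..(2*π), (P' t - 1)^2) = η := by
      rw [intervalIntegral.integral_add_adjacent_intervals (hgint hmem0 hεI) (hgint hεI hbI),
        intervalIntegral.integral_add_adjacent_intervals (hgint hmem0 hbI) (hgint hbI hmem2)]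
      exact hη.symm
    linarith [hsplit, hFTCG, hquarter, hGa_ub, hGb_ub, hsqnn, hηsplit]
  -- The global Wirtinger estimate
  have hWirt : (∫ x in (0:ℝ)..(2*π), (P x - x)^2) ≤ 4 * η := by
    have hall : ∀ δ : ℝ, 0 < δ → (∫ x in (0:ℝ)..(2*π), (P x - x)^2) ≤ 4 * η + δ := by
      intro δ hδ
      set ε := min (π/2) (δ / (2*π*η + 1)) with hεdef
      have hε : 0 < ε := lt_min (by linarith) (by positivity)
      have hεπ : ε < π := lt_of_le_of_lt (min_le_left _ _) (by linarith)
      have hεI : ε ∈ Set.Icc (0:ℝ) (2*π) := ⟨hε.le, by linarith⟩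
      have hbI : (2*π - ε) ∈ Set.Icc (0:ℝ) (2*π) := ⟨by linarith, by linarith⟩
      have hsplitf : (∫ x in (0:ℝ)..ε, (P x - x)^2) + (∫ x in ε..(2*π - ε), (P x - x)^2)
          + (∫ x in (2*π - ε)..(2*π), (P x - x)^2) = ∫ x in (0:ℝ)..(2*π), (P x - x)^2 := by
        rw [intervalIntegral.integral_add_adjacent_intervals (hf2int hmem0 hεI)
          (hf2int hεI hbI),
          intervalIntegral.integral_add_adjacent_intervals (hf2int hmem0 hbI)
          (hf2int hbI hmem2)]
      have h1 : (∫ x in (0:ℝ)..ε, (P x - x)^2) ≤ ε * (π * η) := by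
        have hmono := intervalIntegral.integral_mono_on (μ := volume) hε.le
          (hf2int hmem0 hεI) intervalIntegrable_const
          (fun x hx => hfsq x ⟨hx.1, by linarith [hx.2]⟩)
        rw [intervalIntegral.integral_const, smul_eq_mul] at hmono
        linarith [hmono]
      have h2 : (∫ x in (2*π - ε)..(2*π), (P x - x)^2) ≤ ε * (π * η) := by
        have hmono := intervalIntegral.integral_mono_on (μ := volume) (by linarith : 2*π - ε ≤ 2*π)
          (hf2int hbI hmem2) intervalIntegrable_const
          (fun x hx => hfsq x ⟨by linarith [hx.1], hx.2⟩)
        rw [intervalIntegral.integral_const, smul_eq_mul] at hmono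
        calc (∫ x in (2*π - ε)..(2*π), (P x - x)^2) ≤ (2*π - (2*π - ε)) * (π * η) := hmono
          _ = ε * (π * η) := by ring
      have h3 := hkey ε hε hεπ
      have h5 : ε * (2*π*η + 1) ≤ δ := by
        have h6 : ε ≤ δ / (2*π*η + 1) := min_le_right _ _
        rwa [le_div_iff₀ (by positivity)] at h6
      nlinarith [h1, h2, h3, h5, hsplitf, hε.le]
    rcases le_or_gt (∫ x in (0:ℝ)..(2*π), (P x - x)^2) (4*η) with hc | hc
    · exact hc
    · have h2 := hall (((∫ x in (0:ℝ)..(2*π), (P x - x)^2) - 4*η)/2) (by linarith)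
      linarith
  -- Set-theoretic facts about S₁ and S₂
  have hS₁eq : S₁ = Set.Icc (0:ℝ) (2*π) ∩ ⋃ b ∈ B, Metric.closedBall b (Real.sqrt (π*η)) := by
    rw [hS₁]
    ext x
    simp only [Set.mem_setOf_eq, Set.mem_inter_iff, Set.mem_iUnion, Metric.mem_closedBall,
      Real.dist_eq, exists_prop]
  have hS₁meas : MeasurableSet S₁ := by
    rw [hS₁eq]
    exact measurableSet_Icc.inter
      (B.finite_toSet.measurableSet_biUnion (fun b _ => measurableSet_closedBall))
  have hS₂meas : MeasurableSet S₂ := by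
    rw [hS₂]; exact measurableSet_Icc.diff hS₁meas
  have hS₂sub : S₂ ⊆ Set.Icc (0:ℝ) (2*π) := by
    rw [hS₂]; exact Set.diff_subset
  -- Pointwise bound on S₂
  have hptS₂ : ∀ x ∈ S₂, ‖γ' (P x) - γ' x‖^2 ≤ L^4/256 * (P x - x)^2 := by
    intro x hxS
    have hx : x ∈ Set.Icc (0:ℝ) (2*π) := hS₂sub hxS
    have hxn : ∀ b ∈ B, Real.sqrt (π*η) < |x - b| := by
      intro b hb
      by_contra hcon
      push_neg at hcon
      have hmem : x ∈ S₁ := by rw [hS₁]; exact ⟨hx, b, hb, hcon⟩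
      rw [hS₂] at hxS
      exact hxS.2 hmem
    have habs : |P x - x| ≤ Real.sqrt (π*η) := by
      rw [← Real.sqrt_sq_eq_abs]
      exact Real.sqrt_le_sqrt (hfsq x hx)
    have hnb : ∀ b ∈ B, b ∉ Set.Ioo (min (P x) x) (max (P x) x) := by
      intro b hb hmem
      have h1 : |x - b| < |P x - x| := by
        rcases le_total (P x) x with h | h
        · rw [min_eq_left h, max_eq_right h, Set.mem_Ioo] at hmem
          obtain ⟨hm1, hm2⟩ := hmem
          rw [abs_of_nonneg (by linarith : (0:ℝ) ≤ x - b),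
            abs_of_nonpos (by linarith : P x - x ≤ 0)]
          linarith
        · rw [min_eq_right h, max_eq_left h, Set.mem_Ioo] at hmem
          obtain ⟨hm1, hm2⟩ := hmem
          rw [abs_of_nonpos (by linarith : x - b ≤ 0),
            abs_of_nonneg (by linarith : (0:ℝ) ≤ P x - x)]
          linarith
      linarith [hxn b hb, habs]
    have hle := hlip (P x) (hPIcc x hx) x hx hnb
    calc ‖γ' (P x) - γ' x‖^2 ≤ (L^2/16 * |P x - x|)^2 :=
          pow_le_pow_left₀ (norm_nonneg _) hle 2
      _ = L^4/256 * (P x - x)^2 := by rw [mul_pow, sq_abs]; ring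
  have hf2Icc : IntegrableOn (fun x => (P x - x)^2) (Set.Icc (0:ℝ) (2*π)) volume :=
    hf2cont.integrableOn_compact isCompact_Icc
  -- First estimate
  have key2 : (∫ x in S₂, ‖γ' (P x) - γ' x‖^2) ≤ L^4/64 * η := by
    have s1 : (∫ x in S₂, ‖γ' (P x) - γ' x‖^2) ≤ ∫ x in S₂, L^4/256 * (P x - x)^2 :=
      setIntegral_mono_on hint2
        (MeasureTheory.Integrable.const_mul (hf2Icc.mono_set hS₂sub) _) hS₂meas hptS₂
    have s2 : (∫ x in S₂, L^4/256 * (P x - x)^2) = L^4/256 * ∫ x in S₂, (P x - x)^2 :=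
      MeasureTheory.integral_const_mul _ _
    have s3 : (∫ x in S₂, (P x - x)^2) ≤ ∫ x in Set.Icc (0:ℝ) (2*π), (P x - x)^2 :=
      setIntegral_mono_set hf2Icc (Filter.Eventually.of_forall (fun x => sq_nonneg _))
        (HasSubset.Subset.eventuallyLE hS₂sub)
    have s4 : (∫ x in Set.Icc (0:ℝ) (2*π), (P x - x)^2) = ∫ x in (0:ℝ)..(2*π), (P x - x)^2 := by
      rw [intervalIntegral.integral_of_le h2π.le, MeasureTheory.integral_Icc_eq_integral_Ioc]
    have hL4 : (0:ℝ) ≤ L^4/256 := by positivity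
    calc (∫ x in S₂, ‖γ' (P x) - γ' x‖^2) ≤ L^4/256 * ∫ x in S₂, (P x - x)^2 := by
          rw [← s2]; exact s1
      _ ≤ L^4/256 * (4 * η) := by
          apply mul_le_mul_of_nonneg_left _ hL4
          rw [s4] at s3
          linarith [s3, hWirt]
      _ = L^4/64 * η := by ring
  -- Second estimate
  have hr0 : 0 ≤ Real.sqrt (π*η) := Real.sqrt_nonneg _
  have hvol : volume S₁ ≤ ENNReal.ofReal (L * (2 * Real.sqrt (π*η))) := by
    calc volume S₁ ≤ volume (⋃ b ∈ B, Metric.closedBall b (Real.sqrt (π*η))) := by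
          rw [hS₁eq]; exact measure_mono Set.inter_subset_right
      _ ≤ ∑ b ∈ B, volume (Metric.closedBall b (Real.sqrt (π*η))) :=
          measure_biUnion_finset_le _ _
      _ = ∑ _b ∈ B, ENNReal.ofReal (2 * Real.sqrt (π*η)) := by
          refine Finset.sum_congr rfl (fun b _ => ?_)
          rw [Real.volume_closedBall]
      _ = (B.card : ENNReal) * ENNReal.ofReal (2 * Real.sqrt (π*η)) := by
          rw [Finset.sum_const, nsmul_eq_mul]
      _ = ENNReal.ofReal (B.card) * ENNReal.ofReal (2 * Real.sqrt (π*η)) := by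
          rw [ENNReal.ofReal_natCast]
      _ ≤ ENNReal.ofReal L * ENNReal.ofReal (2 * Real.sqrt (π*η)) :=
          mul_le_mul_left (ENNReal.ofReal_le_ofReal hBcard) _
      _ = ENNReal.ofReal (L * (2 * Real.sqrt (π*η))) := (ENNReal.ofReal_mul (by linarith)).symm
  have hvolreal : (volume S₁).toReal ≤ L * (2 * Real.sqrt (π*η)) :=
    ENNReal.toReal_le_of_le_ofReal (by positivity) hvol
  have hfin : volume S₁ < ⊤ := lt_of_le_of_lt hvol ENNReal.ofReal_lt_top
  have hptS₁ : ∀ x ∈ S₁, ‖γ' (P x) - γ' x‖^2 ≤ ((2*L)^2 : ℝ) := by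
    intro x hxS
    have hx : x ∈ Set.Icc (0:ℝ) (2*π) := by rw [hS₁] at hxS; exact hxS.1
    have h1 : ‖γ' (P x) - γ' x‖ ≤ 2*L := by
      calc ‖γ' (P x) - γ' x‖ ≤ ‖γ' (P x)‖ + ‖γ' x‖ := norm_sub_le _ _
        _ ≤ L + L := add_le_add (hspeed _ (hPIcc x hx)) (hspeed _ hx)
        _ = 2*L := by ring
    exact pow_le_pow_left₀ (norm_nonneg _) h1 2
  have key1 : (∫ x in S₁, ‖γ' (P x) - γ' x‖^2) ≤ 8 * L^3 * Real.sqrt (π*η) := by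
    have s1 : (∫ x in S₁, ‖γ' (P x) - γ' x‖^2) ≤ ∫ _x in S₁, ((2*L)^2 : ℝ) :=
      setIntegral_mono_on hint1 (integrableOn_const hfin.ne) hS₁meas hptS₁
    have s2 : (∫ _x in S₁, ((2*L)^2 : ℝ)) = (volume S₁).toReal * (2*L)^2 := by
      rw [setIntegral_const, smul_eq_mul]; rfl
    have s3 : (volume S₁).toReal * (2*L)^2 ≤ (L * (2 * Real.sqrt (π*η))) * (2*L)^2 :=
      mul_le_mul_of_nonneg_right hvolreal (by positivity)
    refine le_trans s1 ?_
    rw [s2]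
    refine le_trans s3 (le_of_eq ?_)
    ring
  exact ⟨key2, key1⟩
end
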